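/- For λ ∈ [0,1] and θ ∈ [0, π/2], the Gisin state ρ_G(λ,θ) satisfies the zero-discord block condition (equivalently, has zero quantum discord by the Huang criterion) if and only if λ = 0 or θ = 0 or θ = π/2. -/
import Mathlib


open Matrix Real
open scoped Kronecker

def pairToFin4 (p : Fin 2 × Fin 2) : Fin 4 := ⟨2 * p.1.val + p.2.val, by omega⟩

/-- The Gisin state `ρ_G(λ,θ)`, indexed by `Fin 2 × Fin 2` in the basis order
`(0,0), (0,1), (1,0), (1,1)`. -/
noncomputable def gisinState (l t : ℝ) : Matrix (Fin 2 × Fin 2) (Fin 2 × Fin 2) ℂ :=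
  fun p q =>
    !![(((1 - l) / 2 : ℝ) : ℂ), 0, 0, 0;
       0, ((l * Real.sin t ^ 2 : ℝ) : ℂ), ((l * Real.sin t * Real.cos t : ℝ) : ℂ), 0;
       0, ((l * Real.sin t * Real.cos t : ℝ) : ℂ), ((l * Real.cos t ^ 2 : ℝ) : ℂ), 0;
       0, 0, 0, (((1 - l) / 2 : ℝ) : ℂ)] (pairToFin4 p) (pairToFin4 q)

def qblock (M : Matrix (Fin 2 × Fin 2) (Fin 2 × Fin 2) ℂ) (a b : Fin 2) :
    Matrix (Fin 2) (Fin 2) ℂ :=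
  fun e f => M (a, e) (b, f)

def ZeroDiscordBlockCondition (M : Matrix (Fin 2 × Fin 2) (Fin 2 × Fin 2) ℂ) : Prop :=
  (∀ a b : Fin 2, qblock M a b * (qblock M a b)ᴴ = (qblock M a b)ᴴ * qblock M a b) ∧
  (∀ a b a' b' : Fin 2, qblock M a b * qblock M a' b' = qblock M a' b' * qblock M a b)

lemma qb00 (l t : ℝ) : qblock (gisinState l t) 0 0 =
    !![(((1 - l) / 2 : ℝ) : ℂ), 0; 0, ((l * Real.sin t ^ 2 : ℝ) : ℂ)] := by
  ext e f; fin_cases e <;> fin_cases f <;> rfl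

lemma qb01 (l t : ℝ) : qblock (gisinState l t) 0 1 =
    !![0, 0; ((l * Real.sin t * Real.cos t : ℝ) : ℂ), 0] := by
  ext e f; fin_cases e <;> fin_cases f <;> rfl

lemma qb10 (l t : ℝ) : qblock (gisinState l t) 1 0 =
    !![0, ((l * Real.sin t * Real.cos t : ℝ) : ℂ); 0, 0] := by
  ext e f; fin_cases e <;> fin_cases f <;> rfl

lemma qb11 (l t : ℝ) : qblock (gisinState l t) 1 1 =
    !![((l * Real.cos t ^ 2 : ℝ) : ℂ), 0; 0, (((1 - l) / 2 : ℝ) : ℂ)] := by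
  ext e f; fin_cases e <;> fin_cases f <;> rfl

lemma ctdiag (a b : ℂ) : !![a, 0; 0, b]ᴴ = !![star a, 0; 0, star b] := by
  ext i j; fin_cases i <;> fin_cases j <;> simp

theorem gisin_zero_discord_iff (l t : ℝ) (hl : l ∈ Set.Icc (0 : ℝ) 1)
    (ht : t ∈ Set.Icc (0 : ℝ) (Real.pi / 2)) :
    ZeroDiscordBlockCondition (gisinState l t) ↔
      (l = 0 ∨ t = 0 ∨ t = Real.pi / 2) := by
  constructor
  · intro hcond
    have h := hcond.1 0 1
    rw [qb01 l t] at h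
    have h11 := congrFun (congrFun h 1) 1
    simp [Matrix.mul_apply, Fin.sum_univ_two, Matrix.conjTranspose_apply,
      Complex.conj_ofReal] at h11
    have hzero : l * Real.sin t * Real.cos t = 0 := by
      rcases h11 with (h0 | hs) | hc
      · rw [h0]; ring
      · rw [← Complex.ofReal_sin] at hs
        have : Real.sin t = 0 := by exact_mod_cast hs
        rw [this]; ring
      · rw [← Complex.ofReal_cos] at hc
        have : Real.cos t = 0 := by exact_mod_cast hc
        rw [this]; ring
    rcases mul_eq_zero.mp hzero with h1 | hcos
    · rcases mul_eq_zero.mp h1 with h2 | hsin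
      · exact Or.inl h2
      · refine Or.inr (Or.inl ?_)
        by_contra hne
        have htpos : 0 < t := lt_of_le_of_ne ht.1 (Ne.symm hne)
        have : Real.sin t > 0 := Real.sin_pos_of_pos_of_lt_pi htpos
          (lt_of_le_of_lt ht.2 (by linarith [Real.pi_pos]))
        linarith
    · refine Or.inr (Or.inr ?_)
      by_contra hne
      have htlt : t < Real.pi / 2 := lt_of_le_of_ne ht.2 hne
      have : Real.cos t > 0 := Real.cos_pos_of_mem_Ioo
        ⟨by linarith [Real.pi_pos, ht.1], htlt⟩
      linarith
  · intro hcase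
    have h : l * Real.sin t * Real.cos t = 0 := by
      rcases hcase with h | h | h
      · simp [h]
      · simp [h]
      · simp [h, Real.cos_pi_div_two]
    have h' : ((l * Real.sin t * Real.cos t : ℝ) : ℂ) = 0 := by exact_mod_cast h
    have e01 : qblock (gisinState l t) 0 1 = 0 := by
      rw [qb01, h']
      ext i j; fin_cases i <;> fin_cases j <;> simp
    have e10 : qblock (gisinState l t) 1 0 = 0 := by
      rw [qb10, h']
      ext i j; fin_cases i <;> fin_cases j <;> simp
    constructor
    · intro a b
      fin_cases a <;> fin_cases b <;>
        simp only [Fin.zero_eta, Fin.mk_one, e01, e10, qb00, qb11, ctdiag,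
          Matrix.mul_fin_two, Matrix.conjTranspose_zero, Matrix.mul_zero,
          Matrix.zero_mul] <;>
        · congr 1 <;> ring
    · intro a b a' b'
      fin_cases a <;> fin_cases b <;> fin_cases a' <;> fin_cases b' <;>
        simp only [Fin.zero_eta, Fin.mk_one, e01, e10, qb00, qb11,
          Matrix.mul_fin_two, Matrix.mul_zero, Matrix.zero_mul] <;>
        · congr 1 <;> ring
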